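/- Under the hypotheses of the previous explicit solution formula (case δε ≠ 1) with y(0) ≥ 0, one has the uniform bound y(t) ≤ y(0) + M/δ + (ε/|δε − 1|)·(a + M) for all t ≥ 0. -/
import Mathlib

/-- Uniform bound from the explicit solution formula (non-resonant case `δε ≠ 1`)
with `y(0) ≥ 0`: `y(t) ≤ y(0) + M/δ + (ε/|δε − 1|)·(a + M)` for all `t ≥ 0`. -/
theorem uniform_bound_nonresonant (ν ε δ a M : ℝ)
    (hν : 0 < ν) (hε : 0 < ε) (hδ : 0 < δ) (ha : 0 ≤ a) (hM : 0 ≤ M)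
    (hres : δ * ε ≠ 1)
    (y : ℝ → ℝ) (hy0 : 0 ≤ y 0)
    (hy_formula : ∀ t : ℝ, 0 ≤ t →
      y t = M / δ + (y 0 - M / δ) * Real.exp (-δ * t / ν) +
        (ε / (δ * ε - 1)) * (a - M) *
          (Real.exp (-t / (ν * ε)) - Real.exp (-δ * t / ν))) :
    ∀ t : ℝ, 0 ≤ t →
      y t ≤ y 0 + M / δ + (ε / |δ * ε - 1|) * (a + M) := by
  intro t ht
  rw [hy_formula t ht]
  set e1 := Real.exp (-t / (ν * ε)) with he1def
  set e2 := Real.exp (-δ * t / ν) with he2def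
  have he1pos : 0 < e1 := Real.exp_pos _
  have he2pos : 0 < e2 := Real.exp_pos _
  have he1le : e1 ≤ 1 := by
    apply Real.exp_le_one_iff.mpr
    apply div_nonpos_of_nonpos_of_nonneg (by linarith) (by positivity)
  have he2le : e2 ≤ 1 := by
    apply Real.exp_le_one_iff.mpr
    apply div_nonpos_of_nonpos_of_nonneg (by nlinarith) hν.le
  have hMδ : 0 ≤ M / δ := by positivity
  have h1 : M / δ + (y 0 - M / δ) * e2 ≤ y 0 + M / δ := by nlinarith
  have h2 : (ε / (δ * ε - 1)) * (a - M) * (e1 - e2) ≤ (ε / |δ * ε - 1|) * (a + M) := by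
    calc (ε / (δ * ε - 1)) * (a - M) * (e1 - e2)
        ≤ |(ε / (δ * ε - 1)) * (a - M) * (e1 - e2)| := le_abs_self _
      _ = (ε / |δ * ε - 1|) * (|a - M| * |e1 - e2|) := by
          rw [abs_mul, abs_mul, abs_div, abs_of_pos hε, mul_assoc]
      _ ≤ (ε / |δ * ε - 1|) * ((a + M) * 1) := by
          apply mul_le_mul_of_nonneg_left _ (by positivity)
          apply mul_le_mul (abs_le.mpr ⟨by linarith, by linarith⟩)
            (abs_le.mpr ⟨by linarith, by linarith⟩) (abs_nonneg _) (by linarith)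
      _ = (ε / |δ * ε - 1|) * (a + M) := by ring
  linarith
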